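/- Let F be a field of characteristic ≠ 2, K/F a quadratic field extension with nontrivial automorphism σ, and α, β ∈ F^× with γ := −β/α. Inside Mat₂(D_γ), where D_γ = K + K j_γ (j_γ² = −γ, j_γ a = σ(a) j_γ), define embeddings ι_α(a₁ + a₂ j_α) = [[a₁, a₂], [−α σ(a₂), σ(a₁)]] of D_α and ι_β(a₃ + a₄ j_β) = [[a₃, a₄ j_γ], [−α a₄ j_γ, a₃]] of D_β. Then ι_α and ι_β are injective F-algebra homomorphisms whose images commute elementwise: ι_α(x) · ι_β(y) = ι_β(y) · ι_α(x) for all x ∈ D_α, y ∈ D_β. -/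
import Mathlib


private lemma add2 {R : Type*} [Add R] (a b c d e f g h : R) :
    !![a,b;c,d] + !![e,f;g,h] = !![a+e,b+f;c+g,d+h] := by
  ext i j; fin_cases i <;> fin_cases j <;> rfl

private lemma ext2 {R : Type*} (a b c d e f g h : R) (h1 : a = e) (h2 : b = f)
    (h3 : c = g) (h4 : d = h) : !![a,b;c,d] = !![e,f;g,h] := by
  subst h1 h2 h3 h4; rfl

private lemma zero2 {R : Type*} [Zero R] :
    (0 : Matrix (Fin 2) (Fin 2) R) = !![0,0;0,0] := by
  ext i j; fin_cases i <;> fin_cases j <;> rfl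

set_option maxHeartbeats 1000000

/-- with `γ = −β/α`, inside `Mat₂(D_γ)` (where `D_γ = K + K j_γ` is realized
as `2×2` matrices over `K`, with `K` embedded via `κ : a ↦ [[a,0],[0,σ a]]` and
`j_γ = [[0,1],[−γ,0]]`), the maps
`ι_α(a₁ + a₂ j_α) = [[a₁, a₂], [−α σ(a₂), σ(a₁)]]` and
`ι_β(a₃ + a₄ j_β) = [[a₃, a₄ j_γ], [−α a₄ j_γ, a₃]]`
are injective `F`-algebra homomorphisms from `D_α` and `D_β` whose images commute
elementwise.  Elements of `D_δ = K ⊕ K j_δ` (with `j_δ² = −δ`, `j_δ a = σ(a) j_δ`) are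
represented as pairs in `K × K`, so the quaternion product is
`(a₁,a₂)(b₁,b₂) = (a₁b₁ − δ a₂ σ(b₂), a₁b₂ + a₂ σ(b₁))`. -/
theorem stmt_13 {F K : Type*} [Field F] [Field K] [Algebra F K]
    (h2 : (2 : F) ≠ 0) (hquad : Module.finrank F K = 2)
    (σ : K ≃ₐ[F] K) (hσ : σ ≠ AlgEquiv.refl) (hσ2 : ∀ x : K, σ (σ x) = x)
    (α β : F) (hα : α ≠ 0) (hβ : β ≠ 0)
    (γ : F) (hγ : γ = -β / α)
    (κ : K → Matrix (Fin 2) (Fin 2) K) (hκ : ∀ a : K, κ a = !![a, 0; 0, σ a])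
    (jγ : Matrix (Fin 2) (Fin 2) K) (hjγ : jγ = !![0, 1; -(algebraMap F K γ), 0])
    (ια ιβ : K × K → Matrix (Fin 2) (Fin 2) (Matrix (Fin 2) (Fin 2) K))
    (hια : ∀ x : K × K,
      ια x = !![κ x.1, κ x.2; κ (-(algebraMap F K α) * σ x.2), κ (σ x.1)])
    (hιβ : ∀ x : K × K,
      ιβ x = !![κ x.1, κ x.2 * jγ; κ (-(algebraMap F K α) * x.2) * jγ, κ x.1]) :
    Function.Injective ια ∧ Function.Injective ιβ ∧
    (∀ x y : K × K, ια (x.1 + y.1, x.2 + y.2) = ια x + ια y) ∧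
    (∀ x y : K × K, ιβ (x.1 + y.1, x.2 + y.2) = ιβ x + ιβ y) ∧
    ια (1, 0) = 1 ∧ ιβ (1, 0) = 1 ∧
    (∀ c : F, ια (algebraMap F K c, 0)
      = algebraMap F (Matrix (Fin 2) (Fin 2) (Matrix (Fin 2) (Fin 2) K)) c) ∧
    (∀ c : F, ιβ (algebraMap F K c, 0)
      = algebraMap F (Matrix (Fin 2) (Fin 2) (Matrix (Fin 2) (Fin 2) K)) c) ∧
    (∀ x y : K × K,
      ια (x.1 * y.1 - algebraMap F K α * (x.2 * σ y.2), x.1 * y.2 + x.2 * σ y.1)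
        = ια x * ια y) ∧
    (∀ x y : K × K,
      ιβ (x.1 * y.1 - algebraMap F K β * (x.2 * σ y.2), x.1 * y.2 + x.2 * σ y.1)
        = ιβ x * ιβ y) ∧
    (∀ x y : K × K, ια x * ιβ y = ιβ y * ια x) := by
  have hαK : (algebraMap F K) α ≠ 0 := by
    simpa using (map_ne_zero (algebraMap F K)).mpr hα
  have hγ' : algebraMap F K γ = -(algebraMap F K β) / algebraMap F K α := by
    rw [hγ, map_div₀, map_neg]
  have halg : ∀ c : F, algebraMap F (Matrix (Fin 2) (Fin 2) (Matrix (Fin 2) (Fin 2) K)) c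
      = !![ !![algebraMap F K c, 0; 0, algebraMap F K c], 0;
            0, !![algebraMap F K c, 0; 0, algebraMap F K c]] := by
    intro c
    ext i j k l
    fin_cases i <;> fin_cases j <;> fin_cases k <;> fin_cases l <;>
      simp [Matrix.algebraMap_matrix_apply]
  refine ⟨?_, ?_, ?_, ?_, ?_, ?_, ?_, ?_, ?_, ?_, ?_⟩
  · -- Injective ια
    intro x y h
    rw [hια x, hια y] at h
    have e1 : x.1 = y.1 := by
      have := congrFun (congrFun (congrFun (congrFun h 0) 0) 0) 0
      simpa [hκ] using this
    have e2 : x.2 = y.2 := by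
      have := congrFun (congrFun (congrFun (congrFun h 0) 1) 0) 0
      simpa [hκ] using this
    exact Prod.ext e1 e2
  · -- Injective ιβ
    intro x y h
    rw [hιβ x, hιβ y] at h
    have e1 : x.1 = y.1 := by
      have := congrFun (congrFun (congrFun (congrFun h 0) 0) 0) 0
      simpa [hκ] using this
    have e2 : x.2 = y.2 := by
      have := congrFun (congrFun (congrFun (congrFun h 0) 1) 0) 1
      simpa [hκ, hjγ, Matrix.mul_fin_two] using this
    exact Prod.ext e1 e2
  · intro x y
    simp only [hια, hκ, Matrix.mul_fin_two, add2]
    apply ext2 <;> apply ext2 <;> simp [map_add, map_mul, map_neg] <;> ring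
  · intro x y
    simp only [hιβ, hκ, hjγ, Matrix.mul_fin_two, add2]
    apply ext2 <;> apply ext2 <;> simp [map_add, map_mul, map_neg] <;> ring
  · simp only [hια, hκ, Matrix.one_fin_two, zero2, map_one, map_zero, mul_zero]
    try (apply ext2 <;> apply ext2 <;> (try simp))
  · simp only [hιβ, hκ, hjγ, Matrix.one_fin_two, zero2, map_one, map_zero, mul_zero,
      Matrix.mul_fin_two]
    try (apply ext2 <;> apply ext2 <;> (try simp))
  · intro c
    simp only [hια, hκ, halg, zero2, map_zero, mul_zero, AlgEquiv.commutes]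
    try (apply ext2 <;> apply ext2 <;> (try simp))
  · intro c
    simp only [hιβ, hκ, hjγ, halg, zero2, map_zero, mul_zero, Matrix.mul_fin_two]
    try (apply ext2 <;> apply ext2 <;> (try simp))
  · intro x y
    simp only [hια, hκ, Matrix.mul_fin_two, add2]
    apply ext2 <;> apply ext2 <;>
      simp [map_add, map_mul, map_sub, map_neg, hσ2, AlgEquiv.commutes] <;> ring
  · intro x y
    simp only [hιβ, hκ, hjγ, Matrix.mul_fin_two, add2]
    apply ext2 <;> apply ext2 <;>
      (try simp [map_add, map_mul, map_sub, map_neg, hσ2, AlgEquiv.commutes, hγ']) <;>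
      (try field_simp) <;> (try ring)
  · intro x y
    simp only [hια, hιβ, hκ, hjγ, Matrix.mul_fin_two, add2]
    apply ext2 <;> apply ext2 <;>
      simp [map_mul, hσ2, map_add, map_neg, AlgEquiv.commutes] <;> ring
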